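/- arXiv:2510.06775 — 3 statements merged into one kernel-verified Lean document; each statement's English description precedes it below -/
import Mathlib

section
/- The cut-rank function of a graph is submodular: for all X, Y ⊆ V(G), ρ_G(X ∪ Y) + ρ_G(X ∩ Y) ≤ ρ_G(X) + ρ_G(Y). -/
/-!
Write `K_I ⊆ F^V` for the vectors vanishing on `I` and `U_J` for the span of the columns indexed
by `J`. Restricting to the rows `I` has kernel `K_I`, so the rank of `A[I, J]` is
`dim ((U_J + K_I) / K_I)`. This quantity is monotone in `U`, antitone in `K`, and submodular
in the pair `(U, K)` by the modular law for dimensions. Since `U_{J ∩ J'} ≤ U_J ⊓ U_{J'}`,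
`U_{J ∪ J'} = U_J ⊔ U_{J'}`, `K_I ⊓ K_{I'} ≤ K_{I ∪ I'}` and `K_I ⊔ K_{I'} ≤ K_{I ∩ I'}`,
applying this with `J = Xᶜ`, `J' = Yᶜ` gives submodularity of the cut-rank.
-/

/-- Cut-rank of a vertex subset `X`: the GF(2) rank of the submatrix of the
adjacency matrix `A` with rows indexed by `X` and columns by its complement. -/
noncomputable def cutRank {V : Type*} [Fintype V] [DecidableEq V]
    (A : Matrix V V (ZMod 2)) (X : Finset V) : ℕ :=
  (A.submatrix (fun x : {x : V // x ∈ X} => (x : V))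
               (fun y : {y : V // y ∉ X} => (y : V))).rank

open Module Submodule

namespace Submodule

variable {F M N : Type*} [Field F] [AddCommGroup M] [Module F M] [AddCommGroup N] [Module F N]

noncomputable def finrankModulo (U K : Submodule F M) : ℕ :=
  finrank F (U.map K.mkQ)

lemma finrank_map_add_finrank_inf_ker [FiniteDimensional F M] (U : Submodule F M)
    (f : M →ₗ[F] N) :
    finrank F (U.map f) + finrank F ↥(U ⊓ LinearMap.ker f) = finrank F U := by
  have h := LinearMap.finrank_range_add_finrank_ker (f.domRestrict U)
  rwa [LinearMap.range_domRestrict, LinearMap.ker_domRestrict,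
    ← finrank_map_subtype_eq, map_comap_subtype] at h

variable [FiniteDimensional F M]

lemma finrankModulo_add_finrank_inf (U K : Submodule F M) :
    finrankModulo U K + finrank F ↥(U ⊓ K) = finrank F U := by
  have h := finrank_map_add_finrank_inf_ker U K.mkQ
  rwa [ker_mkQ] at h

lemma finrankModulo_mono_left {U U' : Submodule F M} (h : U ≤ U') (K : Submodule F M) :
    finrankModulo U K ≤ finrankModulo U' K :=
  finrank_mono (map_mono h)

lemma finrankModulo_anti_right (U : Submodule F M) {K K' : Submodule F M} (h : K ≤ K') :
    finrankModulo U K' ≤ finrankModulo U K := by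
  have hK := finrankModulo_add_finrank_inf U K
  have hK' := finrankModulo_add_finrank_inf U K'
  have := finrank_mono (inf_le_inf_left U h)
  omega

lemma finrankModulo_inf_add_finrankModulo_sup_le (U₁ U₂ K₁ K₂ : Submodule F M) :
    finrankModulo (U₁ ⊓ U₂) (K₁ ⊓ K₂) + finrankModulo (U₁ ⊔ U₂) (K₁ ⊔ K₂)
      ≤ finrankModulo U₁ K₁ + finrankModulo U₂ K₂ := by
  have h₁ := finrankModulo_add_finrank_inf U₁ K₁
  have h₂ := finrankModulo_add_finrank_inf U₂ K₂
  have hinf := finrankModulo_add_finrank_inf (U₁ ⊓ U₂) (K₁ ⊓ K₂)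
  have hsup := finrankModulo_add_finrank_inf (U₁ ⊔ U₂) (K₁ ⊔ K₂)
  have hU := finrank_sup_add_finrank_inf_eq U₁ U₂
  have hUK := finrank_sup_add_finrank_inf_eq (U₁ ⊓ K₁) (U₂ ⊓ K₂)
  have hinf_eq : (U₁ ⊓ K₁) ⊓ (U₂ ⊓ K₂) = U₁ ⊓ U₂ ⊓ (K₁ ⊓ K₂) := inf_inf_inf_comm _ _ _ _
  have hsup_le : finrank F ↥((U₁ ⊓ K₁) ⊔ (U₂ ⊓ K₂)) ≤ finrank F ↥((U₁ ⊔ U₂) ⊓ (K₁ ⊔ K₂)) :=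
    finrank_mono (sup_le (inf_le_inf le_sup_left le_sup_left)
      (inf_le_inf le_sup_right le_sup_right))
  rw [hinf_eq] at hUK
  omega

end Submodule

namespace Matrix

variable {F m n : Type*} [Field F] [Fintype m] (A : Matrix m n F)

lemma rank_submatrix_eq_finrankModulo (I : Finset m) (J : Finset n) :
    (A.submatrix ((↑) : I → m) ((↑) : J → n)).rank
      = finrankModulo (span F (A.col '' J)) (pi I fun _ => ⊥) := by
  have hcols : Set.range (A.submatrix ((↑) : I → m) ((↑) : J → n)).col
      = LinearMap.funLeft F F ((↑) : I → m) '' (A.col '' J) := by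
    rw [Set.image_image, Set.image_eq_range]
    rfl
  have hker : LinearMap.ker (LinearMap.funLeft F F ((↑) : I → m)) = pi I fun _ => ⊥ := by
    ext v
    simp [funext_iff]
  have hmap := finrank_map_add_finrank_inf_ker (span F (A.col '' J))
    (LinearMap.funLeft F F ((↑) : I → m))
  have hquot := finrankModulo_add_finrank_inf (span F (A.col '' J)) (pi I fun _ => ⊥)
  rw [hker] at hmap
  rw [rank_eq_finrank_span_cols, hcols, span_image]
  omega

lemma rank_submatrix_union_inter_add_rank_submatrix_inter_union_le [DecidableEq m]
    [DecidableEq n] (I₁ I₂ : Finset m) (J₁ J₂ : Finset n) :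
    (A.submatrix ((↑) : ↥(I₁ ∪ I₂) → m) ((↑) : ↥(J₁ ∩ J₂) → n)).rank
        + (A.submatrix ((↑) : ↥(I₁ ∩ I₂) → m) ((↑) : ↥(J₁ ∪ J₂) → n)).rank
      ≤ (A.submatrix ((↑) : I₁ → m) ((↑) : J₁ → n)).rank
        + (A.submatrix ((↑) : I₂ → m) ((↑) : J₂ → n)).rank := by
  simp only [rank_submatrix_eq_finrankModulo]
  set U : Finset n → Submodule F (m → F) := fun J => span F (A.col '' J)
  set K : Finset m → Submodule F (m → F) := fun I => pi I fun _ => ⊥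
  have hU_inter : U (J₁ ∩ J₂) ≤ U J₁ ⊓ U J₂ :=
    le_inf (span_mono (by gcongr; exact Finset.inter_subset_left))
      (span_mono (by gcongr; exact Finset.inter_subset_right))
  have hU_union : U (J₁ ∪ J₂) = U J₁ ⊔ U J₂ := by
    simp only [U, Finset.coe_union, Set.image_union, span_union]
  have hK_anti {I I' : Finset m} (h : I ⊆ I') : K I' ≤ K I := fun v hv i hi => hv i (h hi)
  have hK_union : K I₁ ⊓ K I₂ ≤ K (I₁ ∪ I₂) := fun v hv i hi =>
    (Finset.mem_union.mp hi).elim (hv.1 i) (hv.2 i)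
  calc finrankModulo (U (J₁ ∩ J₂)) (K (I₁ ∪ I₂)) + finrankModulo (U (J₁ ∪ J₂)) (K (I₁ ∩ I₂))
      ≤ finrankModulo (U J₁ ⊓ U J₂) (K I₁ ⊓ K I₂)
          + finrankModulo (U J₁ ⊔ U J₂) (K I₁ ⊔ K I₂) := by
        rw [hU_union]
        gcongr
        · exact (finrankModulo_mono_left hU_inter _).trans (finrankModulo_anti_right _ hK_union)
        · exact finrankModulo_anti_right _ (sup_le (hK_anti Finset.inter_subset_left)
            (hK_anti Finset.inter_subset_right))
    _ ≤ finrankModulo (U J₁) (K I₁) + finrankModulo (U J₂) (K I₂) :=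
        finrankModulo_inf_add_finrankModulo_sup_le _ _ _ _

end Matrix

lemma cutRank_eq_rank_submatrix {V : Type*} [Fintype V] [DecidableEq V]
    (A : Matrix V V (ZMod 2)) (X : Finset V) :
    cutRank A X = (A.submatrix ((↑) : X → V) ((↑) : ↥Xᶜ → V)).rank := by
  rw [cutRank, ← Matrix.rank_submatrix _ (Equiv.refl X)
    (Equiv.subtypeEquivRight fun _ => Finset.mem_compl.symm : {y // y ∉ X} ≃ ↥Xᶜ)]
  rfl

theorem stmt6_general {V : Type*} [Fintype V] [DecidableEq V]
    (A : Matrix V V (ZMod 2))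
    (X Y : Finset V) :
    cutRank A (X ∪ Y) + cutRank A (X ∩ Y) ≤ cutRank A X + cutRank A Y := by
  simp only [cutRank_eq_rank_submatrix]
  rw [Finset.compl_union, Finset.compl_inter]
  exact A.rank_submatrix_union_inter_add_rank_submatrix_inter_union_le X Y Xᶜ Yᶜ

/-- The cut-rank function of a graph is submodular:
`ρ(X ∪ Y) + ρ(X ∩ Y) ≤ ρ(X) + ρ(Y)`. -/
theorem stmt6 {V : Type*} [Fintype V] [DecidableEq V]
    (A : Matrix V V (ZMod 2)) (hsymm : A.IsSymm) (hdiag : ∀ v, A v v = 0)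
    (X Y : Finset V) :
    cutRank A (X ∪ Y) + cutRank A (X ∩ Y) ≤ cutRank A X + cutRank A Y :=
  stmt6_general A X Y
end

section
/- Let A ∈ GF(2)^{n×n} be symmetric. Form A′ ∈ GF(2)^{(n+k-1)×(n+k-1)} by inserting, after position p, a block of k−1 new indices arranged in a path: the new block B₂ is tridiagonal with 1's on the super- and sub-diagonal and 0 elsewhere, the new indices connect to position p only via the first new index and to one later position q > p only via the last new index, with no other new off-block entries, and the entry A_{p,q} is set to 0 in A′ while all other entries among old indices are unchanged. Then for every t, rank(A′[{1,...,t}, rest]) ≤ max_s rank(A[{1,...,s}, rest]) + 2. -/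
/-!
Split `A' = A₀ + E + R`, where `A₀` is `A` placed on the old indices with zeros elsewhere, `E`
is the single entry at `(p, q)` undoing the flip, and `R` carries the inserted path. The old
indices keep their relative order, so every prefix cut of `A₀` is a prefix cut of `A` padded
with zero rows and columns, of rank at most `w`. The cut of `E` has rank at most `1`. Above the
diagonal `R` is supported on the edges of the path `p-1, p, …, p+k-2, q+k-1`, whose positions
increase along it, so at most one of its edges crosses a prefix cut and the cut of `R` has at
most one nonzero row. Subadditivity of rank gives `w + 2`.
-/

/-- The prefix cut-rank: the GF(2) rank of the submatrix of `A` with rows the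
first `t` indices and columns the remaining indices. -/
noncomputable def prefRank {N : ℕ} (A : Matrix (Fin N) (Fin N) (ZMod 2)) (t : ℕ) : ℕ :=
  (A.submatrix (fun x : {j : Fin N // (j : ℕ) < t} => (x : Fin N))
               (fun y : {j : Fin N // ¬ (j : ℕ) < t} => (y : Fin N))).rank

open Matrix Function

namespace Matrix

variable {m n R : Type*} [Fintype n]

theorem rank_add_le [Field R] (A B : Matrix m n R) : (A + B).rank ≤ A.rank + B.rank := by
  rw [rank, mulVecLin_add]
  exact (Submodule.finrank_mono (LinearMap.range_add_le _ _)).trans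
    (Submodule.finrank_add_le_finrank_add_finrank _ _)

theorem rank_le_one_of_subsingleton_support_row [Fintype m] [CommSemiring R]
    [StrongRankCondition R] (A : Matrix m n R) (h : (support A.row).Subsingleton) :
    A.rank ≤ 1 := by
  classical
  obtain h0 | ⟨i, hi⟩ := h.eq_empty_or_singleton
  · exact (A.rank_le_card_of_support_subset ∅ (by simp [h0])).trans zero_le_one
  · simpa using A.rank_le_card_of_support_subset {i} (by simp [hi])

end Matrix

noncomputable def extendByZero {m n α : Type*} [Zero α] (e : m → n) (A : Matrix m m α) :
    Matrix n n α :=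
  extend e (fun a => extend e (A a) 0) 0

section extendByZero

variable {m n α : Type*} [Zero α] {e : m → n} (A : Matrix m m α)

theorem extendByZero_apply_apply (he : Injective e) (a b : m) :
    extendByZero e A (e a) (e b) = A a b := by
  simp [extendByZero, he.extend_apply]

theorem extendByZero_apply_of_notMem_range_left {x : n} (hx : x ∉ Set.range e) (y : n) :
    extendByZero e A x y = 0 := by
  simp [extendByZero, extend_apply' _ _ _ hx]

theorem extendByZero_apply_of_notMem_range_right (x : n) {y : n} (hy : y ∉ Set.range e) :
    extendByZero e A x y = 0 := by
  unfold extendByZero extend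
  split_ifs
  exacts [extend_apply' _ _ _ hy, rfl]

end extendByZero

section prefRank

variable {N : ℕ}

theorem prefRank_add_le (M M' : Matrix (Fin N) (Fin N) (ZMod 2)) (t : ℕ) :
    prefRank (M + M') t ≤ prefRank M t + prefRank M' t := by
  simp only [prefRank, submatrix_add]
  exact rank_add_le _ _

theorem prefRank_le_one_of_crossing_rows_eq (M : Matrix (Fin N) (Fin N) (ZMod 2)) (t : ℕ)
    (h : ∀ x x' y y' : Fin N, (x : ℕ) < t → (x' : ℕ) < t → t ≤ y → t ≤ y' →
      M x y ≠ 0 → M x' y' ≠ 0 → x = x') :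
    prefRank M t ≤ 1 := by
  refine rank_le_one_of_subsingleton_support_row _ fun x hx x' hx' => ?_
  obtain ⟨y, hy⟩ := Function.ne_iff.1 hx
  obtain ⟨y', hy'⟩ := Function.ne_iff.1 hx'
  exact Subtype.ext (h x x' y y' x.2 x'.2 (not_lt.1 y.2) (not_lt.1 y'.2) hy hy')

theorem prefRank_single_le_one (x₀ y₀ : Fin N) (a : ZMod 2) (t : ℕ) :
    prefRank (single x₀ y₀ a) t ≤ 1 := by
  have row {x y : Fin N} (hxy : single x₀ y₀ a x y ≠ 0) : x = x₀ :=
    by_contra fun hx => hxy (single_apply_of_row_ne (Ne.symm hx) _ _ _)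
  exact prefRank_le_one_of_crossing_rows_eq _ t fun x x' y y' _ _ _ _ h h' =>
    (row h).trans (row h').symm

theorem prefRank_le_one_of_support_path (M : Matrix (Fin N) (Fin N) (ZMod 2)) (c : ℕ → ℕ)
    (hc : StrictMono c)
    (hM : ∀ x y : Fin N, x < y → M x y ≠ 0 →
      ∃ i, (x : ℕ) = c i ∧ (y : ℕ) = c (i + 1))
    (t : ℕ) : prefRank M t ≤ 1 := by
  refine prefRank_le_one_of_crossing_rows_eq M t fun x x' y y' hx hx' hy hy' h h' => ?_
  obtain ⟨i, hi, hi'⟩ := hM x y (by omega) h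
  obtain ⟨j, hj, hj'⟩ := hM x' y' (by omega) h'
  obtain hij | rfl | hij := lt_trichotomy i j
  · have := hc.monotone (show i + 1 ≤ j from hij); omega
  · exact Fin.ext (hi.trans hj.symm)
  · have := hc.monotone (show j + 1 ≤ i from hij); omega

theorem prefRank_extendByZero_le {n : ℕ} (e : Fin n → Fin N) (he : Injective e)
    (A : Matrix (Fin n) (Fin n) (ZMod 2)) (s t : ℕ)
    (hst : ∀ a, (e a : ℕ) < t ↔ (a : ℕ) < s) :
    prefRank (extendByZero e A) t ≤ prefRank A s := by
  let X₁ : Matrix {x : Fin N // (x : ℕ) < t} {a : Fin n // (a : ℕ) < s} (ZMod 2) :=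
    of fun x a => if e a = x then 1 else 0
  let X₂ : Matrix {b : Fin n // ¬ (b : ℕ) < s} {y : Fin N // ¬ (y : ℕ) < t} (ZMod 2) :=
    of fun b y => if e b = y then 1 else 0
  have hfactor : X₁ * A.submatrix (fun a : {a : Fin n // (a : ℕ) < s} => (a : Fin n))
      (fun b : {b : Fin n // ¬ (b : ℕ) < s} => (b : Fin n)) * X₂ =
      (extendByZero e A).submatrix (fun x : {x : Fin N // (x : ℕ) < t} => (x : Fin N))
        (fun y : {y : Fin N // ¬ (y : ℕ) < t} => (y : Fin N)) := by
    ext ⟨x, hx⟩ ⟨y, hy⟩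
    simp only [X₁, X₂, mul_apply, of_apply, submatrix_apply, ite_mul, one_mul, zero_mul,
      mul_ite, mul_one, mul_zero]
    by_cases hxe : x ∈ Set.range e
    · obtain ⟨a, rfl⟩ := hxe
      by_cases hye : y ∈ Set.range e
      · obtain ⟨b, rfl⟩ := hye
        rw [extendByZero_apply_apply A he, Fintype.sum_eq_single ⟨b, by simpa [hst] using hy⟩,
          if_pos rfl, Fintype.sum_eq_single ⟨a, (hst a).1 hx⟩, if_pos rfl]
        · exact fun a' ha' => if_neg (he.ne (Subtype.coe_ne_coe.2 ha'))
        · exact fun b' hb' => if_neg (he.ne (Subtype.coe_ne_coe.2 hb'))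
      · rw [extendByZero_apply_of_notMem_range_right A _ hye]
        exact Fintype.sum_eq_zero _ fun b => if_neg fun h => hye ⟨b, h⟩
    · rw [extendByZero_apply_of_notMem_range_left A hxe]
      refine Fintype.sum_eq_zero _ fun b => ?_
      simp only [ite_eq_right_iff]
      exact fun _ => Fintype.sum_eq_zero _ fun a => if_neg fun h => hxe ⟨a, h⟩
  unfold prefRank
  rw [← hfactor]
  exact (rank_mul_le_left _ _).trans (rank_mul_le_right _ _)

end prefRank

/-- Positions, in the enlarged matrix, of the path `P, new₀, …, new_{k-2}, Q` for `P` at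
position `p - 1` and `Q` at old position `q`; continued past `k` only to be strictly monotone. -/
def insertedPath (k p q : ℕ) (i : ℕ) : ℕ :=
  if i < k then p - 1 + i else q + (k - 1) + (i - k)

theorem insertedPath_strictMono {k p q : ℕ} (hp : 1 ≤ p) (hpq : p ≤ q) :
    StrictMono (insertedPath k p q) :=
  strictMono_nat_of_lt_succ fun i => by unfold insertedPath; split_ifs <;> omega

section skipBlock

variable {n p : ℕ} {d : ℕ}

variable (p d) in
def skipBlock (j : Fin n) : Fin (n + d) :=
  if (j : ℕ) < p then ⟨j, by omega⟩ else ⟨j + d, by omega⟩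

variable (d) in
def blockIdx (hpn : p ≤ n) (u : Fin d) : Fin (n + d) :=
  ⟨p + u, by omega⟩

theorem val_skipBlock (j : Fin n) :
    (skipBlock p d j : ℕ) = if (j : ℕ) < p then (j : ℕ) else j + d := by
  unfold skipBlock; split_ifs <;> rfl

theorem val_blockIdx (hpn : p ≤ n) (u : Fin d) : (blockIdx d hpn u : ℕ) = p + u := rfl

variable (p d) in
theorem skipBlock_injective : Injective (skipBlock (n := n) p d) := fun a b h => by
  have := congrArg Fin.val h
  rw [val_skipBlock, val_skipBlock] at this
  exact Fin.ext (by split_ifs at this <;> omega)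

theorem blockIdx_notMem_range_skipBlock (hpn : p ≤ n) (u : Fin d) :
    blockIdx d hpn u ∉ Set.range (skipBlock p d) := by
  rintro ⟨a, h⟩
  have := congrArg Fin.val h
  rw [val_skipBlock, val_blockIdx] at this
  split_ifs at this <;> omega

theorem exists_skipBlock_eq_or_blockIdx_eq (hpn : p ≤ n) (x : Fin (n + d)) :
    (∃ a, skipBlock p d a = x) ∨ ∃ u, blockIdx d hpn u = x := by
  by_cases hxp : (x : ℕ) < p
  · exact .inl ⟨⟨x, by omega⟩, Fin.ext (by rw [val_skipBlock, if_pos hxp])⟩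
  by_cases hxd : (x : ℕ) < p + d
  · exact .inr ⟨⟨x - p, by omega⟩, Fin.ext (by rw [val_blockIdx]; dsimp only; omega)⟩
  · refine .inl ⟨⟨x - d, by omega⟩, Fin.ext ?_⟩
    rw [val_skipBlock]; dsimp only; split_ifs <;> omega

end skipBlock

theorem sub_extendByZero_sub_single_apply_eq_zero {m n α : Type*} [DecidableEq n]
    [AddCommGroup α] {e : m → n} (he : Injective e) {A : Matrix m m α} {A' : Matrix n n α}
    {a₀ b₀ : m}
    (hA' : ∀ a b, ¬(a = a₀ ∧ b = b₀ ∨ a = b₀ ∧ b = a₀) → A' (e a) (e b) = A a b)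
    (h₀ : A' (e a₀) (e b₀) = 0) {a b : m} (hab : ¬(a = b₀ ∧ b = a₀)) :
    (A' - extendByZero e A - single (e a₀) (e b₀) (-A a₀ b₀)) (e a) (e b) = 0 := by
  rw [Matrix.sub_apply, Matrix.sub_apply, extendByZero_apply_apply A he]
  by_cases hab₀ : a = a₀ ∧ b = b₀
  · obtain ⟨rfl, rfl⟩ := hab₀
    rw [h₀, single_apply_same, zero_sub, sub_neg_eq_add, neg_add_cancel]
  · have hne : ¬(e a₀ = e a ∧ e b₀ = e b) := fun h => hab₀ ⟨he h.1.symm, he h.2.symm⟩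
    rw [hA' a b (by tauto), single_apply_of_ne _ _ _ _ _ hne, sub_self, sub_zero]

theorem exists_insertedPath_eq_of_apply_ne_zero {n k p : ℕ} (hp1 : 1 ≤ p) (hpn : p ≤ n)
    {A : Matrix (Fin n) (Fin n) (ZMod 2)}
    {A' : Matrix (Fin (n + (k - 1))) (Fin (n + (k - 1))) (ZMod 2)} (hA' : A'.IsSymm)
    {P Q : Fin n} (hP : (P : ℕ) = p - 1) (hQ : p ≤ (Q : ℕ))
    (hOld : ∀ i j : Fin n, ¬((i = P ∧ j = Q) ∨ (i = Q ∧ j = P)) →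
      A' (skipBlock p (k - 1) i) (skipBlock p (k - 1) j) = A i j)
    (hFlip : A' (skipBlock p (k - 1) P) (skipBlock p (k - 1) Q) = 0)
    (hB2 : ∀ s t : Fin (k - 1), A' (blockIdx (k - 1) hpn s) (blockIdx (k - 1) hpn t) =
      if (s : ℕ) + 1 = (t : ℕ) ∨ (t : ℕ) + 1 = (s : ℕ) then 1 else 0)
    (hB13 : ∀ (j : Fin n) (t : Fin (k - 1)),
      A' (skipBlock p (k - 1) j) (blockIdx (k - 1) hpn t) =
        if (j = P ∧ (t : ℕ) = 0) ∨ (j = Q ∧ (t : ℕ) = k - 2) then 1 else 0)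
    (x y : Fin (n + (k - 1))) (hxy : x < y)
    (hxy0 : (A' - extendByZero (skipBlock p (k - 1)) A -
      single (skipBlock p (k - 1) P) (skipBlock p (k - 1) Q) (-A P Q)) x y ≠ 0) :
    ∃ i, (x : ℕ) = insertedPath k p Q i ∧ (y : ℕ) = insertedPath k p Q (i + 1) := by
  have hnew u := blockIdx_notMem_range_skipBlock (p := p) (d := k - 1) hpn u
  have hPv : (skipBlock p (k - 1) P : ℕ) = p - 1 := by rw [val_skipBlock, if_pos (by omega), hP]
  have hQv : (skipBlock p (k - 1) Q : ℕ) = Q + (k - 1) := by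
    rw [val_skipBlock, if_neg (by omega)]
  rw [Fin.lt_def] at hxy
  rcases exists_skipBlock_eq_or_blockIdx_eq hpn x with ⟨a, rfl⟩ | ⟨u, rfl⟩ <;>
    rcases exists_skipBlock_eq_or_blockIdx_eq hpn y with ⟨b, rfl⟩ | ⟨v, rfl⟩
  · refine absurd (sub_extendByZero_sub_single_apply_eq_zero (skipBlock_injective p _) hOld hFlip
      ?_) hxy0
    rintro ⟨rfl, rfl⟩
    omega
  · rw [Matrix.sub_apply, Matrix.sub_apply,
      extendByZero_apply_of_notMem_range_right A _ (hnew v),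
      single_apply_of_col_ne _ _ (fun h => hnew v ⟨Q, h⟩), hB13, sub_zero, sub_zero] at hxy0
    rw [val_blockIdx] at hxy
    split_ifs at hxy0 with h
    · rcases h with ⟨rfl, hv0⟩ | ⟨rfl, -⟩
      · exact ⟨0, by simp only [insertedPath, val_blockIdx]; split_ifs <;> omega⟩
      · omega
    · exact absurd rfl hxy0
  · rw [Matrix.sub_apply, Matrix.sub_apply, extendByZero_apply_of_notMem_range_left A (hnew u),
      single_apply_of_row_ne (fun h => hnew u ⟨P, h⟩), hA'.apply, hB13, sub_zero, sub_zero]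
      at hxy0
    rw [val_blockIdx] at hxy
    split_ifs at hxy0 with h
    · rcases h with ⟨rfl, -⟩ | ⟨rfl, hu0⟩
      · omega
      · exact ⟨k - 1, by simp only [insertedPath, val_blockIdx]; split_ifs <;> omega⟩
    · exact absurd rfl hxy0
  · rw [Matrix.sub_apply, Matrix.sub_apply, extendByZero_apply_of_notMem_range_left A (hnew u),
      single_apply_of_row_ne (fun h => hnew u ⟨P, h⟩), hB2, sub_zero, sub_zero] at hxy0
    rw [val_blockIdx, val_blockIdx] at hxy
    split_ifs at hxy0 with h
    · exact ⟨u + 1, by simp only [insertedPath, val_blockIdx]; split_ifs <;> omega⟩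
    · exact absurd rfl hxy0

/-- Inserting after position `p` a path of `k − 1` new indices
(tridiagonal block `B₂`), attached via its first new index to old position `p`
(last row of `B₁`) and via its last new index to a later old position `q`
(last row of `B₃`), with the old `(p,q)` entry flipped to `0` and all other old
entries unchanged, increases every prefix cut-rank by at most `2`. -/
theorem stmt11 (n k p : ℕ) (hp1 : 1 ≤ p) (hpn : p ≤ n)
    (A : Matrix (Fin n) (Fin n) (ZMod 2))
    (A' : Matrix (Fin (n + (k - 1))) (Fin (n + (k - 1))) (ZMod 2)) (hA' : A'.IsSymm)
    (oldIdx : Fin n → Fin (n + (k - 1)))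
    (hOldIdx : oldIdx = fun j : Fin n =>
      if h : (j : ℕ) < p then ⟨(j : ℕ), by omega⟩
      else ⟨(j : ℕ) + (k - 1), by have := j.isLt; omega⟩)
    (newIdx : Fin (k - 1) → Fin (n + (k - 1)))
    (hNewIdx : newIdx = fun t : Fin (k - 1) => ⟨p + (t : ℕ), by have := t.isLt; omega⟩)
    (P Q : Fin n) (hP : (P : ℕ) = p - 1) (hQ : p ≤ (Q : ℕ))
    (hOld : ∀ i j : Fin n, ¬((i = P ∧ j = Q) ∨ (i = Q ∧ j = P)) →
      A' (oldIdx i) (oldIdx j) = A i j)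
    (hFlip : A' (oldIdx P) (oldIdx Q) = 0)
    (hB2 : ∀ s t : Fin (k - 1), A' (newIdx s) (newIdx t) =
      if (s : ℕ) + 1 = (t : ℕ) ∨ (t : ℕ) + 1 = (s : ℕ) then 1 else 0)
    (hB13 : ∀ (j : Fin n) (t : Fin (k - 1)), A' (oldIdx j) (newIdx t) =
      if (j = P ∧ (t : ℕ) = 0) ∨ (j = Q ∧ (t : ℕ) = k - 2) then 1 else 0)
    (w : ℕ) (hw : ∀ s : ℕ, prefRank A s ≤ w) :
    ∀ t : ℕ, prefRank A' t ≤ w + 2 := by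
  obtain rfl : oldIdx = skipBlock p (k - 1) := hOldIdx
  obtain rfl : newIdx = blockIdx (k - 1) hpn := hNewIdx
  intro t
  have hst (a : Fin n) :
      (skipBlock p (k - 1) a : ℕ) < t ↔ (a : ℕ) < min t p + (t - (p + (k - 1))) := by
    rw [val_skipBlock]; split_ifs <;> omega
  set A₀ := extendByZero (skipBlock p (k - 1)) A
  set E := single (skipBlock p (k - 1) P) (skipBlock p (k - 1) Q) (-A P Q)
  set R := A' - A₀ - E
  calc prefRank A' t = prefRank (A₀ + E + R) t := by rw [add_add_sub_cancel, add_sub_cancel]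
    _ ≤ prefRank A₀ t + prefRank E t + prefRank R t :=
      (prefRank_add_le _ _ t).trans (add_le_add_left (prefRank_add_le _ _ t) _)
    _ ≤ w + 1 + 1 := by
      gcongr
      · exact (prefRank_extendByZero_le _ (skipBlock_injective p _) A _ t hst).trans (hw _)
      · exact prefRank_single_le_one _ _ _ t
      · exact prefRank_le_one_of_support_path R _ (insertedPath_strictMono hp1 hQ)
          (exists_insertedPath_eq_of_apply_ne_zero hp1 hpn hA' hP hQ hOld hFlip hB2 hB13) t
end

section
/- Let G be the w × m grid (lattice) graph with w ≤ m. Then the treewidth of G equals w. -/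
/-- A tree decomposition of a graph `G`: a finite tree whose nodes carry bags of
vertices covering all vertices and edges, such that for each vertex the set of
bags containing it is connected in the tree (i.e., every node on the path
between two bags containing `v` also contains `v`). -/
structure TreeDecomp {V : Type*} [DecidableEq V] (G : SimpleGraph V) where
  ι : Type
  finι : Fintype ι
  tree : SimpleGraph ι
  connected : tree.Connected
  acyclic : tree.IsAcyclic
  bag : ι → Finset V
  cover : ∀ v : V, ∃ i, v ∈ bag i
  edgeCover : ∀ u v : V, G.Adj u v → ∃ i, u ∈ bag i ∧ v ∈ bag i
  coherent : ∀ (v : V) (i j : ι), v ∈ bag i → v ∈ bag j →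
    ∀ (p : tree.Walk i j), p.IsPath → ∀ k ∈ p.support, v ∈ bag k

/-- The width of a tree decomposition: the maximum bag size minus one. -/
noncomputable def TreeDecomp.width {V : Type*} [DecidableEq V] {G : SimpleGraph V}
    (td : TreeDecomp G) : ℕ :=
  ((@Finset.univ td.ι td.finι).sup fun i => (td.bag i).card) - 1

/-- The treewidth of a graph: the minimum width of a tree decomposition. -/
noncomputable def treewidth {V : Type*} [DecidableEq V] (G : SimpleGraph V) : ℕ :=
  sInf { w | ∃ td : TreeDecomp G, td.width = w }

/-- The `w × m` grid graph: vertices `{0,...,w-1} × {0,...,m-1}` with edges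
between vertices at ℓ¹-distance 1. -/
def gridGraph (w m : ℕ) : SimpleGraph (Fin w × Fin m) :=
  SimpleGraph.fromRel fun a b =>
    (a.1 = b.1 ∧ (a.2 : ℕ) + 1 = (b.2 : ℕ)) ∨ (a.2 = b.2 ∧ (a.1 : ℕ) + 1 = (b.1 : ℕ))

open SimpleGraph

lemma pg_ivt {N : ℕ} {a b : Fin N} (p : (pathGraph N).Walk a b) (y : Fin N)
    (h : (min a.val b.val) ≤ y.val ∧ y.val ≤ max a.val b.val) : y ∈ p.support := by
  induction p with
  | nil =>
    simp only [Walk.support_nil, List.mem_singleton]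
    exact Fin.ext (by omega)
  | @cons u c b hadj q ih =>
    rw [pathGraph_adj] at hadj
    by_cases hy : y = u
    · simp [hy]
    · have hyu : y.val ≠ u.val := fun hh => hy (Fin.ext hh)
      have : y ∈ q.support := by
        apply ih
        rcases hadj with h1 | h1 <;> omega
      simp [this]

lemma pg_cons_step {N : ℕ} {a c b : Fin N} (hadj : (pathGraph N).Adj a c)
    (q : (pathGraph N).Walk c b) (hp : (Walk.cons hadj q).IsPath) :
    (a.val < b.val → c.val = a.val + 1) ∧ (b.val < a.val → c.val + 1 = a.val) := by
  have ha : a ∉ q.support := by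
    have := hp.support_nodup
    simp only [Walk.support_cons, List.nodup_cons] at this
    exact this.1
  rw [pathGraph_adj] at hadj
  constructor
  · intro hab
    rcases hadj with h1 | h1
    · omega
    · exact absurd (pg_ivt q a (by omega)) ha
  · intro hba
    rcases hadj with h1 | h1
    · exact absurd (pg_ivt q a (by omega)) ha
    · omega

lemma pg_path_support {N : ℕ} {a b : Fin N} (p : (pathGraph N).Walk a b) (hp : p.IsPath) :
    ∀ y ∈ p.support, min a.val b.val ≤ y.val ∧ y.val ≤ max a.val b.val := by
  induction p with
  | nil => intro y hy; simp at hy; subst hy; omega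
  | @cons u c b hadj q ih =>
    have hq : q.IsPath := hp.of_cons
    have key := pg_cons_step hadj q hp
    intro y hy
    have hub : u.val ≠ b.val := by
      intro he
      have : u = b := Fin.ext he
      subst this
      have hu : u ∉ q.support := by
        have := hp.support_nodup
        simp only [Walk.support_cons, List.nodup_cons] at this
        exact this.1
      exact hu q.end_mem_support
    simp only [Walk.support_cons, List.mem_cons] at hy
    rcases hy with rfl | hy
    · omega
    · have := ih hq y hy
      rcases Nat.lt_or_ge u.val b.val with hc | hc
      · have := key.1 hc; omega
      · have := key.2 (by omega); omega

lemma pg_acyclic (N : ℕ) : (pathGraph N).IsAcyclic := by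
  intro v c hc
  cases c with
  | nil => exact hc.ne_nil rfl
  | @cons _ c' _ hadj q =>
    rw [Walk.cons_isCycle_iff] at hc
    obtain ⟨hq, he⟩ := hc
    cases q with
    | nil => exact (pathGraph N).loopless.irrefl _ hadj
    | @cons _ d _ hadj2 q2 =>
      have hcv : c' ≠ v := hadj.ne'
      have key := pg_cons_step hadj2 q2 hq
      have hadj' := hadj
      rw [pathGraph_adj] at hadj'
      have hd : d = v := by
        apply Fin.ext
        have hcv' : c'.val ≠ v.val := fun h => hcv (Fin.ext h)
        rcases hadj' with h1 | h1
        · have := key.2 (by omega); omega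
        · have := key.1 (by omega); omega
      subst hd
      have : q2 = Walk.nil := Walk.isPath_iff_eq_nil.mp hq.of_cons
      subst this
      apply he
      simp [Sym2.eq_swap]

open SimpleGraph


lemma pg_connected {N : ℕ} (h : 0 < N) : (pathGraph N).Connected := by
  obtain ⟨n, rfl⟩ : ∃ n, N = n + 1 := ⟨N - 1, by omega⟩
  exact pathGraph_connected n

variable {w m : ℕ}


def nu (w : ℕ) {m : ℕ} (v : Fin w × Fin m) : ℕ := v.1.val + w * v.2.val

lemma nu_lt (v : Fin w × Fin m) : nu w v < m * w := by
  have := ((finProdFinEquiv : Fin m × Fin w ≃ Fin (m*w)) (v.2, v.1)).isLt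
  simpa [nu, finProdFinEquiv] using this

lemma nu_inj {u v : Fin w × Fin m} (h : nu w u = nu w v) : u = v := by
  have : ((finProdFinEquiv : Fin m × Fin w ≃ Fin (m*w)) (u.2, u.1)) =
      (finProdFinEquiv (v.2, v.1)) := by
    apply Fin.ext; simpa [nu, finProdFinEquiv] using h
  have := finProdFinEquiv.injective this
  have h1 : u.2 = v.2 := congrArg Prod.fst this
  have h2 : u.1 = v.1 := congrArg Prod.snd this
  exact Prod.ext h2 h1

lemma grid_adj_nu {u v : Fin w × Fin m} (h : (gridGraph w m).Adj u v) :
    nu w v = nu w u + w ∨ nu w v = nu w u + 1 ∨ nu w u = nu w v + w ∨ nu w u = nu w v + 1 := by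
  rw [gridGraph, fromRel_adj] at h
  obtain ⟨-, h⟩ := h
  rcases h with (⟨h1, h2⟩ | ⟨h1, h2⟩) | (⟨h1, h2⟩ | ⟨h1, h2⟩)
  · left; simp only [nu, ← h1, ← h2, Nat.mul_succ]; omega
  · right; left; simp only [nu, ← h1, h2]; omega
  · right; right; left; simp only [nu, ← h1, ← h2, Nat.mul_succ]; omega
  · right; right; right; simp only [nu, ← h1, h2]; omega

def gridBag (w m : ℕ) (k : Fin (m * w)) : Finset (Fin w × Fin m) :=
  Finset.univ.filter (fun v => k.val ≤ nu w v ∧ nu w v ≤ k.val + w)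

lemma mem_gridBag {k : Fin (m * w)} {v : Fin w × Fin m} :
    v ∈ gridBag w m k ↔ k.val ≤ nu w v ∧ nu w v ≤ k.val + w := by
  simp [gridBag]

noncomputable def gridTD (w m : ℕ) (hw : 0 < w) (hm : 0 < m) : TreeDecomp (gridGraph w m) where
  ι := Fin (m * w)
  finι := inferInstance
  tree := pathGraph (m * w)
  connected := pg_connected (Nat.mul_pos hm hw)
  acyclic := pg_acyclic _
  bag := gridBag w m
  cover := fun v => ⟨⟨nu w v, nu_lt v⟩, by simp [mem_gridBag]⟩
  edgeCover := by
    intro u v h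
    have hu := nu_lt u
    have hv := nu_lt v
    have := grid_adj_nu h
    refine ⟨⟨min (nu w u) (nu w v), by omega⟩, ?_, ?_⟩ <;> rw [mem_gridBag] <;> simp <;> omega
  coherent := by
    intro v i j hi hj p hp k hk
    rw [mem_gridBag] at hi hj ⊢
    have := pg_path_support p hp k hk
    omega


lemma gridBag_card_le (k : Fin (m * w)) : (gridBag w m k).card ≤ w + 1 := by
  have : (gridBag w m k).card ≤ (Finset.Icc k.val (k.val + w)).card := by
    apply Finset.card_le_card_of_injOn (fun v => nu w v)
    · intro v hv
      rw [Finset.mem_coe, mem_gridBag] at hv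
      simp [Finset.mem_Icc]; omega
    · intro a _ b _ h
      exact nu_inj h
  rw [Nat.card_Icc] at this; omega

lemma gridBag_zero_card (hw : 2 ≤ w) (hm : 2 ≤ m) (h0 : 0 < m * w) :
    w + 1 ≤ (gridBag w m ⟨0, h0⟩).card := by
  classical
  have hinj : ∀ k : Fin (w + 1), ∃ v : Fin w × Fin m, nu w v = k.val ∧ v ∈ gridBag w m ⟨0, h0⟩ := by
    intro k
    by_cases h : k.val < w
    · refine ⟨(⟨k.val, h⟩, ⟨0, by omega⟩), by simp [nu], ?_⟩
      rw [mem_gridBag]; simp [nu]; omega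
    · have hk : k.val = w := by omega
      refine ⟨(⟨0, by omega⟩, ⟨1, by omega⟩), by simp [nu, hk], ?_⟩
      rw [mem_gridBag]; simp [nu]
  choose f hf1 hf2 using hinj
  have : (Finset.univ : Finset (Fin (w+1))).card ≤ (gridBag w m ⟨0, h0⟩).card := by
    apply Finset.card_le_card_of_injOn f (fun k _ => hf2 k)
    intro a _ b _ h
    apply Fin.ext
    rw [← hf1 a, ← hf1 b, h]
  simpa using this

lemma gridTD_width (hw : 2 ≤ w) (hm : 2 ≤ m) :
    (gridTD w m (by omega) (by omega)).width = w := by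
  have h0 : 0 < m * w := by positivity
  have hsup : ((Finset.univ : Finset (Fin (m*w))).sup fun k => (gridBag w m k).card) = w + 1 := by
    apply le_antisymm
    · exact Finset.sup_le fun k _ => gridBag_card_le k
    · exact le_trans (gridBag_zero_card hw hm h0) (Finset.le_sup (f := fun k => (gridBag w m k).card) (Finset.mem_univ (⟨0, h0⟩ : Fin (m*w))))
  show ((Finset.univ : Finset (Fin (m*w))).sup fun k => (gridBag w m k).card) - 1 = w
  omega



variable {w m : ℕ}

lemma adj_right {i : Fin w} {j j' : Fin m} (h : j.val + 1 = j'.val) :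
    (gridGraph w m).Adj (i, j) (i, j') := by
  rw [gridGraph, fromRel_adj]
  refine ⟨?_, Or.inl (Or.inl ⟨rfl, h⟩)⟩
  intro hh
  have : j = j' := congrArg Prod.snd hh
  subst this; omega

lemma adj_down {i i' : Fin w} {j : Fin m} (h : i.val + 1 = i'.val) :
    (gridGraph w m).Adj (i, j) (i', j) := by
  rw [gridGraph, fromRel_adj]
  refine ⟨?_, Or.inl (Or.inr ⟨rfl, h⟩)⟩
  intro hh
  have : i = i' := congrArg Prod.fst hh
  subst this; omega

lemma rowWalkAux (d : ℕ) (i : Fin w) (j j' : Fin m) (h : j.val + d = j'.val) :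
    ∃ p : (gridGraph w m).Walk (i, j) (i, j'),
      ∀ x ∈ p.support, x.1 = i ∧ j.val ≤ x.2.val ∧ x.2.val ≤ j'.val := by
  induction d generalizing j with
  | zero =>
    have : j = j' := Fin.ext (by omega)
    subst this
    exact ⟨Walk.nil, by simp⟩
  | succ d ih =>
    have hlt : j.val + 1 < m := by have := j'.isLt; omega
    set j'' : Fin m := ⟨j.val + 1, hlt⟩ with hj''
    obtain ⟨p, hp⟩ := ih j'' (by simp [hj'']; omega)
    refine ⟨Walk.cons (adj_right (by simp [hj''])) p, ?_⟩
    intro x hx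
    simp only [Walk.support_cons, List.mem_cons] at hx
    rcases hx with rfl | hx
    · exact ⟨rfl, by simp; omega⟩
    · have := hp x hx
      refine ⟨this.1, by have := this.2; simp [hj''] at this; omega⟩

lemma rowWalk (i : Fin w) (j j' : Fin m) :
    ∃ p : (gridGraph w m).Walk (i, j) (i, j'),
      ∀ x ∈ p.support, x.1 = i ∧ min j.val j'.val ≤ x.2.val ∧ x.2.val ≤ max j.val j'.val := by
  rcases Nat.le_total j.val j'.val with h | h
  · obtain ⟨p, hp⟩ := rowWalkAux (j'.val - j.val) i j j' (by omega)
    exact ⟨p, fun x hx => by have := hp x hx; exact ⟨this.1, by omega⟩⟩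
  · obtain ⟨p, hp⟩ := rowWalkAux (j.val - j'.val) i j' j (by omega)
    refine ⟨p.reverse, fun x hx => ?_⟩
    rw [Walk.support_reverse, List.mem_reverse] at hx
    have := hp x hx
    exact ⟨this.1, by omega⟩

lemma colWalkAux (d : ℕ) (j : Fin m) (i i' : Fin w) (h : i.val + d = i'.val) :
    ∃ p : (gridGraph w m).Walk (i, j) (i', j),
      ∀ x ∈ p.support, x.2 = j ∧ i.val ≤ x.1.val ∧ x.1.val ≤ i'.val := by
  induction d generalizing i with
  | zero =>
    have : i = i' := Fin.ext (by omega)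
    subst this
    exact ⟨Walk.nil, by simp⟩
  | succ d ih =>
    have hlt : i.val + 1 < w := by have := i'.isLt; omega
    set i'' : Fin w := ⟨i.val + 1, hlt⟩ with hi''
    obtain ⟨p, hp⟩ := ih i'' (by simp [hi'']; omega)
    refine ⟨Walk.cons (adj_down (by simp [hi''])) p, ?_⟩
    intro x hx
    simp only [Walk.support_cons, List.mem_cons] at hx
    rcases hx with rfl | hx
    · exact ⟨rfl, by simp; omega⟩
    · have := hp x hx
      refine ⟨this.1, by have := this.2; simp [hi''] at this; omega⟩

lemma colWalk (j : Fin m) (i i' : Fin w) :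
    ∃ p : (gridGraph w m).Walk (i, j) (i', j),
      ∀ x ∈ p.support, x.2 = j ∧ min i.val i'.val ≤ x.1.val ∧ x.1.val ≤ max i.val i'.val := by
  rcases Nat.le_total i.val i'.val with h | h
  · obtain ⟨p, hp⟩ := colWalkAux (i'.val - i.val) j i i' (by omega)
    exact ⟨p, fun x hx => by have := hp x hx; exact ⟨this.1, by omega⟩⟩
  · obtain ⟨p, hp⟩ := colWalkAux (i.val - i'.val) j i' i (by omega)
    refine ⟨p.reverse, fun x hx => ?_⟩
    rw [Walk.support_reverse, List.mem_reverse] at hx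
    have := hp x hx
    exact ⟨this.1, by omega⟩

def BIdx (w m : ℕ) : Type := (Fin (w-1) × Fin (m-1)) ⊕ Bool

def elt (w m : ℕ) : BIdx w m → Set (Fin w × Fin m)
  | .inl (i, j) => {v | (v.1.val = i.val ∧ v.2.val ≤ m-2) ∨ (v.2.val = j.val ∧ v.1.val ≤ w-2)}
  | .inr false => {v | v.1.val = w-1}
  | .inr true => {v | v.2.val = m-1 ∧ v.1.val ≤ w-2}

section Bramble

variable (hw : 2 ≤ w) (hm : 2 ≤ m)

include hw hm in
lemma elt_conn (idx : BIdx w m) (a b : Fin w × Fin m)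
    (ha : a ∈ elt w m idx) (hb : b ∈ elt w m idx) :
    ∃ p : (gridGraph w m).Walk a b, ∀ x ∈ p.support, x ∈ elt w m idx := by
  obtain ⟨a1, a2⟩ := a
  obtain ⟨b1, b2⟩ := b
  match idx with
  | .inr false =>
    have ha' : a1.val = w - 1 := ha
    have hb' : b1.val = w - 1 := hb
    obtain ⟨p, hp⟩ := rowWalk a1 a2 b2
    have he : ((a1, b2) : Fin w × Fin m) = (b1, b2) := by
      rw [show a1 = b1 from Fin.ext (by omega)]
    refine ⟨p.copy rfl he, fun x hx => ?_⟩
    rw [Walk.support_copy] at hx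
    show x.1.val = w - 1
    rw [(hp x hx).1]; exact ha'
  | .inr true =>
    have ha1 : a2.val = m - 1 := ha.1
    have ha2 : a1.val ≤ w - 2 := ha.2
    have hb1 : b2.val = m - 1 := hb.1
    have hb2 : b1.val ≤ w - 2 := hb.2
    obtain ⟨p, hp⟩ := colWalk a2 a1 b1
    have he : ((b1, a2) : Fin w × Fin m) = (b1, b2) := by
      rw [show a2 = b2 from Fin.ext (by omega)]
    refine ⟨p.copy rfl he, fun x hx => ?_⟩
    rw [Walk.support_copy] at hx
    obtain ⟨h2, h3, h4⟩ := hp x hx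
    refine ⟨?_, by omega⟩
    show x.2.val = m - 1
    rw [h2]; exact ha1
  | .inl (i, j) =>
    have hiw : i.val < w := by have := i.isLt; omega
    have hjm : j.val < m := by have := j.isLt; omega
    have hi2 : i.val ≤ w - 2 := by have := i.isLt; omega
    have hj2 : j.val ≤ m - 2 := by have := j.isLt; omega
    set ci : Fin w := ⟨i.val, hiw⟩ with hci
    set cj : Fin m := ⟨j.val, hjm⟩ with hcj
    have hciv : ci.val = i.val := rfl
    have hcjv : cj.val = j.val := rfl
    have key : ∀ (v1 : Fin w) (v2 : Fin m), (v1, v2) ∈ elt w m (.inl (i, j)) →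
        ∃ p : (gridGraph w m).Walk (v1, v2) (ci, cj),
          ∀ x ∈ p.support, x ∈ elt w m (.inl (i, j)) := by
      intro v1 v2 hv
      rcases hv with ⟨h1, h2⟩ | ⟨h1, h2⟩
      · -- row part: v1.val = i.val, v2.val ≤ m - 2
        obtain ⟨p, hp⟩ := rowWalk v1 v2 cj
        have he : ((v1, cj) : Fin w × Fin m) = (ci, cj) := by
          rw [show v1 = ci from Fin.ext (by rw [hciv]; exact h1)]
        refine ⟨p.copy rfl he, fun x hx => ?_⟩
        rw [Walk.support_copy] at hx
        obtain ⟨hx1, hx2, hx3⟩ := hp x hx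
        have h1' : v1.val = i.val := h1
        have h2' : v2.val ≤ m - 2 := h2
        have hxv : x.1.val = v1.val := by rw [hx1]
        have hc' : cj.val = j.val := rfl
        left
        exact ⟨by omega, by omega⟩
      · -- column part: v2.val = j.val, v1.val ≤ w - 2
        obtain ⟨p, hp⟩ := colWalk v2 v1 ci
        have he : ((ci, v2) : Fin w × Fin m) = (ci, cj) := by
          rw [show v2 = cj from Fin.ext (by rw [hcjv]; exact h1)]
        refine ⟨p.copy rfl he, fun x hx => ?_⟩
        rw [Walk.support_copy] at hx
        obtain ⟨hx1, hx2, hx3⟩ := hp x hx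
        have h1' : v2.val = j.val := h1
        have h2' : v1.val ≤ w - 2 := h2
        have hxv : x.2.val = v2.val := by rw [hx1]
        have hc' : ci.val = i.val := rfl
        right
        exact ⟨by omega, by omega⟩
    obtain ⟨p1, hp1⟩ := key a1 a2 ha
    obtain ⟨p2, hp2⟩ := key b1 b2 hb
    refine ⟨p1.append p2.reverse, fun x hx => ?_⟩
    rw [Walk.mem_support_append_iff] at hx
    rcases hx with hx | hx
    · exact hp1 x hx
    · rw [Walk.support_reverse, List.mem_reverse] at hx
      exact hp2 x hx

end Bramble

section Bramble2

variable (hw : 2 ≤ w) (hm : 2 ≤ m)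

include hw hm in
lemma elt_touch (idx1 idx2 : BIdx w m) :
    ∃ a b : Fin w × Fin m, a ∈ elt w m idx1 ∧ b ∈ elt w m idx2 ∧
      (a = b ∨ (gridGraph w m).Adj a b) := by
  have hw1 : w - 1 < w := by omega
  have hw2 : w - 2 < w := by omega
  have hm1 : m - 1 < m := by omega
  have hm2 : m - 2 < m := by omega
  have h0w : 0 < w := by omega
  have h0m : 0 < m := by omega
  match idx1, idx2 with
  | .inl (i, j), .inl (i', j') =>
    have hiw : i.val < w := by have := i.isLt; omega
    have hjm : j'.val < m := by have := j'.isLt; omega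
    refine ⟨(⟨i.val, hiw⟩, ⟨j'.val, hjm⟩), (⟨i.val, hiw⟩, ⟨j'.val, hjm⟩), ?_, ?_, Or.inl rfl⟩
    · exact Or.inl ⟨rfl, show j'.val ≤ m - 2 by have := j'.isLt; omega⟩
    · exact Or.inr ⟨rfl, show i.val ≤ w - 2 by have := i.isLt; omega⟩
  | .inl (i, j), .inr false =>
    have hjm : j.val < m := by have := j.isLt; omega
    refine ⟨(⟨w-2, hw2⟩, ⟨j.val, hjm⟩), (⟨w-1, hw1⟩, ⟨j.val, hjm⟩), ?_, rfl,
      Or.inr (adj_down (show w - 2 + 1 = w - 1 by omega))⟩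
    exact Or.inr ⟨rfl, le_refl _⟩
  | .inr false, .inl (i, j) =>
    have hjm : j.val < m := by have := j.isLt; omega
    refine ⟨(⟨w-1, hw1⟩, ⟨j.val, hjm⟩), (⟨w-2, hw2⟩, ⟨j.val, hjm⟩), rfl, ?_,
      Or.inr (adj_down (show w - 2 + 1 = w - 1 by omega)).symm⟩
    exact Or.inr ⟨rfl, le_refl _⟩
  | .inl (i, j), .inr true =>
    have hiw : i.val < w := by have := i.isLt; omega
    refine ⟨(⟨i.val, hiw⟩, ⟨m-2, hm2⟩), (⟨i.val, hiw⟩, ⟨m-1, hm1⟩), ?_, ?_,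
      Or.inr (adj_right (show m - 2 + 1 = m - 1 by omega))⟩
    · exact Or.inl ⟨rfl, le_refl _⟩
    · exact ⟨rfl, show i.val ≤ w - 2 by have := i.isLt; omega⟩
  | .inr true, .inl (i, j) =>
    have hiw : i.val < w := by have := i.isLt; omega
    refine ⟨(⟨i.val, hiw⟩, ⟨m-1, hm1⟩), (⟨i.val, hiw⟩, ⟨m-2, hm2⟩), ?_, ?_,
      Or.inr (adj_right (show m - 2 + 1 = m - 1 by omega)).symm⟩
    · exact ⟨rfl, show i.val ≤ w - 2 by have := i.isLt; omega⟩
    · exact Or.inl ⟨rfl, le_refl _⟩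
  | .inr false, .inr false =>
    exact ⟨(⟨w-1, hw1⟩, ⟨0, h0m⟩), (⟨w-1, hw1⟩, ⟨0, h0m⟩), rfl, rfl, Or.inl rfl⟩
  | .inr true, .inr true =>
    exact ⟨(⟨0, h0w⟩, ⟨m-1, hm1⟩), (⟨0, h0w⟩, ⟨m-1, hm1⟩), ⟨rfl, show 0 ≤ w - 2 by omega⟩,
      ⟨rfl, show 0 ≤ w - 2 by omega⟩, Or.inl rfl⟩
  | .inr false, .inr true =>
    exact ⟨(⟨w-1, hw1⟩, ⟨m-1, hm1⟩), (⟨w-2, hw2⟩, ⟨m-1, hm1⟩), rfl, ⟨rfl, le_refl _⟩,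
      Or.inr (adj_down (show w - 2 + 1 = w - 1 by omega)).symm⟩
  | .inr true, .inr false =>
    exact ⟨(⟨w-2, hw2⟩, ⟨m-1, hm1⟩), (⟨w-1, hw1⟩, ⟨m-1, hm1⟩), ⟨rfl, le_refl _⟩, rfl,
      Or.inr (adj_down (show w - 2 + 1 = w - 1 by omega))⟩

include hw hm in
lemma elt_hit (hwm : w ≤ m) (S : Finset (Fin w × Fin m))
    (hhit : ∀ idx : BIdx w m, ∃ v ∈ S, v ∈ elt w m idx) : w + 1 ≤ S.card := by
  classical
  obtain ⟨r, hrS, hr⟩ := hhit (.inr false)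
  obtain ⟨l, hlS, hl⟩ := hhit (.inr true)
  have hr1 : r.1.val = w - 1 := hr
  have hl1 : l.2.val = m - 1 := hl.1
  have hl2 : l.1.val ≤ w - 2 := hl.2
  have hrl : r ≠ l := by
    intro h; rw [h] at hr1; omega
  set S' := (S.erase r).erase l with hS'
  have hlS' : l ∈ S.erase r := Finset.mem_erase.mpr ⟨fun h => hrl h.symm, hlS⟩
  have hcard : S'.card + 2 = S.card := by
    have e1 : (S.erase r).card = S.card - 1 := Finset.card_erase_of_mem hrS
    have e2 : S'.card = (S.erase r).card - 1 := Finset.card_erase_of_mem hlS'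
    have h2 : 0 < (S.erase r).card := Finset.card_pos.mpr ⟨l, hlS'⟩
    omega
  have hhit' : ∀ (i : Fin (w-1)) (j : Fin (m-1)), ∃ v ∈ S', v ∈ elt w m (.inl (i, j)) := by
    intro i j
    obtain ⟨v, hvS, hv⟩ := hhit (.inl (i, j))
    refine ⟨v, ?_, hv⟩
    have hv1 : v.1.val ≤ w - 2 := by
      rcases hv with ⟨h1, _⟩ | ⟨_, h2⟩
      · have := i.isLt; omega
      · exact h2
    have hv2 : v.2.val ≤ m - 2 := by
      rcases hv with ⟨_, h2⟩ | ⟨h1, _⟩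
      · exact h2
      · have := j.isLt; omega
    refine Finset.mem_erase.mpr ⟨?_, Finset.mem_erase.mpr ⟨?_, hvS⟩⟩
    · intro h; rw [h] at hv2; omega
    · intro h; rw [h] at hv1; omega
  have hfinal : w - 1 ≤ S'.card := by
    by_cases hall : ∀ i : Fin (w-1), ∃ v ∈ S', v.1.val = i.val
    · choose f hf1 hf2 using hall
      have : (Finset.univ : Finset (Fin (w-1))).card ≤ S'.card := by
        apply Finset.card_le_card_of_injOn f (fun k _ => hf1 k)
        intro a _ b _ h
        apply Fin.ext
        rw [← hf2 a, ← hf2 b, h]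
      simpa using this
    · push_neg at hall
      obtain ⟨i0, hi0⟩ := hall
      have hcol : ∀ j : Fin (m-1), ∃ v ∈ S', v.2.val = j.val := by
        intro j
        obtain ⟨v, hvS, hv⟩ := hhit' i0 j
        refine ⟨v, hvS, ?_⟩
        rcases hv with ⟨h1, _⟩ | ⟨h1, _⟩
        · exact absurd h1 (hi0 v hvS)
        · exact h1
      choose f hf1 hf2 using hcol
      have : (Finset.univ : Finset (Fin (m-1))).card ≤ S'.card := by
        apply Finset.card_le_card_of_injOn f (fun k _ => hf1 k)
        intro a _ b _ h
        apply Fin.ext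
        rw [← hf2 a, ← hf2 b, h]
      simp at this
      omega
  omega

end Bramble2
variable {V : Type*} [DecidableEq V] {G : SimpleGraph V} (td : TreeDecomp G)

/-- If `v` lies in two bags and not in bag `t`, there is a walk between the two
bag nodes avoiding `t`. -/
lemma TreeDecomp.avoid_single {v : V} {i j t : td.ι} (hi : v ∈ td.bag i) (hj : v ∈ td.bag j)
    (ht : v ∉ td.bag t) : ∃ q : td.tree.Walk i j, t ∉ q.support := by
  classical
  have hr : td.tree.Reachable i j := td.connected.preconnected i j
  let p := hr.some.toPath
  refine ⟨p.val, fun hts => ?_⟩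
  exact ht (td.coherent v i j hi hj p.val p.property t hts)

lemma TreeDecomp.walk_avoid {X : Set V} {t : td.ι} (ht : ∀ v ∈ td.bag t, v ∉ X) :
    ∀ {u1 u2 : V} (p : G.Walk u1 u2), (∀ x ∈ p.support, x ∈ X) →
    ∀ {s1 s2 : td.ι}, u1 ∈ td.bag s1 → u2 ∈ td.bag s2 →
    ∃ q : td.tree.Walk s1 s2, t ∉ q.support := by
  intro u1 u2 p
  induction p with
  | nil =>
    intro hX s1 s2 h1 h2
    exact td.avoid_single h1 h2 (fun hc => ht _ hc (hX _ (by simp)))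
  | @cons a c b hadj q ih =>
    intro hX s1 s2 h1 h2
    obtain ⟨s'', hs1, hs2⟩ := td.edgeCover a c hadj
    have haX : a ∈ X := hX a (by simp)
    have hcX : c ∈ X := hX c (by simp)
    have hu : a ∉ td.bag t := fun hc => ht a hc haX
    obtain ⟨q1, hq1⟩ := td.avoid_single h1 hs1 hu
    obtain ⟨q2, hq2⟩ := ih (fun x hx => hX x (by simp [hx])) hs2 h2
    refine ⟨q1.append q2, fun hc => ?_⟩
    rw [Walk.mem_support_append_iff] at hc
    exact hc.elim hq1 hq2

/-- Bramble covering lemma: some bag meets every element of a bramble. -/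
lemma TreeDecomp.bramble_cover {Idx : Type*} (elt : Idx → Set V)
    (hconn : ∀ idx (a b : V), a ∈ elt idx → b ∈ elt idx →
      ∃ p : G.Walk a b, ∀ x ∈ p.support, x ∈ elt idx)
    (htouch : ∀ i1 i2, ∃ a b : V, a ∈ elt i1 ∧ b ∈ elt i2 ∧ (a = b ∨ G.Adj a b)) :
    ∃ t : td.ι, ∀ idx, ∃ v ∈ td.bag t, v ∈ elt idx := by
  classical
  letI : Fintype td.ι := td.finι
  by_contra hcon
  push_neg at hcon
  -- hcon : ∀ t, ∃ idx, ∀ v ∈ td.bag t, v ∉ elt idx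
  have hbag : ∀ i1 i2, ∃ s, (∃ v ∈ td.bag s, v ∈ elt i1) ∧ (∃ v' ∈ td.bag s, v' ∈ elt i2) := by
    intro i1 i2
    obtain ⟨a, b, ha, hb, hab⟩ := htouch i1 i2
    rcases hab with rfl | hadj
    · obtain ⟨s, hs⟩ := td.cover a
      exact ⟨s, ⟨a, hs, ha⟩, ⟨a, hs, hb⟩⟩
    · obtain ⟨s, hsa, hsb⟩ := td.edgeCover a b hadj
      exact ⟨s, ⟨a, hsa, ha⟩, ⟨b, hsb, hb⟩⟩
  have key : ∀ t : td.ι, ∃ (idx : Idx) (t' : td.ι), td.tree.Adj t t' ∧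
      ∀ s : td.ι, (∃ v ∈ td.bag s, v ∈ elt idx) →
        ∃ q : td.tree.Walk t' s, t ∉ q.support := by
    intro t
    obtain ⟨idx, hidx⟩ := hcon t
    obtain ⟨s0, hs0, -⟩ := hbag idx idx
    obtain ⟨u0, hu0b, hu0⟩ := hs0
    have hts0 : t ≠ s0 := fun he => hidx u0 (he ▸ hu0b) hu0
    have hr : td.tree.Reachable t s0 := td.connected.preconnected t s0
    set p : td.tree.Path t s0 := hr.some.toPath with hp
    have hnil : ¬ p.val.Nil := by
      intro hn
      exact hts0 (Walk.Nil.eq hn)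
    rw [Walk.not_nil_iff] at hnil
    obtain ⟨t', hadj, q, hq⟩ := hnil
    have htq : t ∉ q.support := by
      have := p.property.support_nodup
      rw [hq] at this
      simpa using fun hc => (List.nodup_cons.mp (by simpa using this)).1 hc
    refine ⟨idx, t', hadj, ?_⟩
    rintro s ⟨v, hvb, hv⟩
    obtain ⟨q2, hq2⟩ := td.walk_avoid hidx
      ((hconn idx u0 v hu0 hv).choose) ((hconn idx u0 v hu0 hv).choose_spec) hu0b hvb
    refine ⟨q.append q2, fun hc => ?_⟩
    rw [Walk.mem_support_append_iff] at hc
    exact hc.elim htq hq2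
  choose f g hadj hreach using key
  haveI : DecidableEq td.ι := Classical.decEq _
  haveI : DecidableRel td.tree.Adj := Classical.decRel _
  have htree : td.tree.IsTree := ⟨td.connected, td.acyclic⟩
  have hcard : Fintype.card td.tree.edgeFinset < Fintype.card td.ι := by
    rw [Fintype.card_coe]
    have := htree.card_edgeFinset
    omega
  obtain ⟨t, t', hne, hee⟩ := Fintype.exists_ne_map_eq_of_card_lt
    (fun t => (⟨s(t, g t), mem_edgeFinset.mpr (hadj t)⟩ : td.tree.edgeFinset)) hcard
  have hee' : s(t, g t) = s(t', g t') := congrArg Subtype.val hee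
  rw [Sym2.eq_iff] at hee'
  have hgt : g t = t' ∧ g t' = t := by
    rcases hee' with ⟨h1, h2⟩ | ⟨h1, h2⟩
    · exact absurd h1 hne
    · exact ⟨h2, h1.symm⟩
  obtain ⟨s', hsX, hsY⟩ := hbag (f t) (f t')
  obtain ⟨q1, hq1⟩ := hreach t s' hsX
  obtain ⟨q2, hq2⟩ := hreach t' s' hsY
  -- q1 : Walk (g t) s' avoiding t ; q2 : Walk (g t') s' avoiding t'
  set q1' : td.tree.Walk t' s' := q1.copy hgt.1 rfl with hd1
  have hq1' : t ∉ q1'.support := by rw [hd1, Walk.support_copy]; exact hq1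
  set q2' : td.tree.Walk t s' := q2.copy hgt.2 rfl with hd2
  have hq2' : t' ∉ q2'.support := by rw [hd2, Walk.support_copy]; exact hq2
  have hadj' : td.tree.Adj t' t := by
    have := hadj t
    rw [hgt.1] at this
    exact this.symm
  set P1 : td.tree.Path t' s' := q1'.toPath with hP1
  have hP1t : t ∉ P1.val.support := fun hc => hq1' (Walk.support_toPath_subset q1' hc)
  have hP2path : (Walk.cons hadj' q2'.toPath.val).IsPath := by
    apply (q2'.toPath.property).cons
    exact fun hc => hq2' (Walk.support_toPath_subset q2' hc)
  set P2 : td.tree.Path t' s' := ⟨Walk.cons hadj' q2'.toPath.val, hP2path⟩ with hP2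
  have hP2t : t ∈ P2.val.support := by
    rw [hP2]
    simp [Walk.support_cons]
  have : P1 = P2 := isAcyclic_iff_path_unique.mp td.acyclic P1 P2
  rw [this] at hP1t
  exact hP1t hP2t


/-- The treewidth of the `w × m` grid graph with `2 ≤ w ≤ m`
equals `w`. -/
theorem stmt17 (w m : ℕ) (hw : 2 ≤ w) (hwm : w ≤ m) :
    treewidth (gridGraph w m) = w := by
  classical
  have hm : 2 ≤ m := le_trans hw hwm
  have hub : (gridTD w m (by omega) (by omega)).width = w := gridTD_width hw hm
  have hlb : ∀ td : TreeDecomp (gridGraph w m), w ≤ td.width := by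
    intro td
    letI : Fintype td.ι := td.finι
    obtain ⟨t, ht⟩ := td.bramble_cover (elt w m) (elt_conn hw hm) (elt_touch hw hm)
    have hcard : w + 1 ≤ (td.bag t).card := elt_hit hw hm hwm (td.bag t) ht
    have hsup : w + 1 ≤ (@Finset.univ td.ι td.finι).sup (fun i => (td.bag i).card) :=
      le_trans hcard (Finset.le_sup (f := fun i => (td.bag i).card) (Finset.mem_univ t))
    rw [TreeDecomp.width]
    omega
  have hne : {n | ∃ td : TreeDecomp (gridGraph w m), td.width = n}.Nonempty := ⟨w, _, hub⟩
  have h1 : sInf {n | ∃ td : TreeDecomp (gridGraph w m), td.width = n} ≤ w :=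
    Nat.sInf_le ⟨_, hub⟩
  have h2 := Nat.sInf_mem hne
  obtain ⟨td0, htd0⟩ := h2
  have h3 := hlb td0
  rw [treewidth]
  omega
end
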